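/- arXiv:2103.03746 — 3 statements merged into one kernel-verified Lean document; each statement's English description precedes it below -/
import Mathlib

section
/- Let p > 1 and B > 0, and define D₀ = A₀ > 0 and D_{j+1} ≥ B D_j^p / p^{j+1} for a sequence of positive reals D_j. Then for all j, ln D_j ≥ ((p^j - 1)/(p-1)) ln B - p^j (∑_{k=0}^{j} k p^{-k}) ln p + p^j ln D₀. In particular, with E = (1/(p-1)) min(0, ln B) - (∑_{k=0}^{∞} k p^{-k}) ln p + ln A₀, one has D_j ≥ exp(E p^j) for all sufficiently large j. -/
/-- Lower-bound iteration estimate on the coefficients `D j` in John's iteration method. -/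
theorem john_iteration_lower_bound
    (p B A₀ E : ℝ) (hp : 1 < p) (hB : 0 < B) (hA₀ : 0 < A₀)
    (D : ℕ → ℝ) (hDpos : ∀ j, 0 < D j) (hD0 : D 0 = A₀)
    (hrec : ∀ j, B * D j ^ p / p ^ (j + 1) ≤ D (j + 1))
    (hE : E = (1 / (p - 1)) * min 0 (Real.log B)
        - (∑' k : ℕ, (k : ℝ) * p ^ (-(k : ℝ))) * Real.log p + Real.log A₀) :
    (∀ j : ℕ,
      ((p ^ j - 1) / (p - 1)) * Real.log B
        - p ^ j * (∑ k ∈ Finset.range (j + 1), (k : ℝ) * p ^ (-(k : ℝ))) * Real.log p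
        + p ^ j * Real.log (D 0) ≤ Real.log (D j)) ∧
    ∃ N : ℕ, ∀ j ≥ N, Real.exp (E * p ^ j) ≤ D j := by
  have hp0 : 0 < p := lt_trans one_pos hp
  have hp1 : 0 < p - 1 := by linarith
  have hlp : 0 < Real.log p := Real.log_pos hp
  have hinv : ∀ k : ℕ, p ^ (-(k : ℝ)) = ((p : ℝ) ^ k)⁻¹ := by
    intro k
    rw [Real.rpow_neg hp0.le, Real.rpow_natCast]
  have heq : ∀ k : ℕ, (k : ℝ) * p ^ (-(k : ℝ)) = (k : ℝ) ^ 1 * (p⁻¹) ^ k := by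
    intro k
    rw [hinv, ← inv_pow, pow_one]
  have hsum : Summable (fun k : ℕ => (k : ℝ) * p ^ (-(k : ℝ))) := by
    have h : ‖p⁻¹‖ < 1 := by
      rw [Real.norm_eq_abs, abs_of_pos (by positivity)]
      rw [inv_lt_one_iff₀]; right; exact hp
    have := summable_pow_mul_geometric_of_norm_lt_one (k := 1) h
    exact this.congr (fun k => (heq k).symm)
  -- the key pointwise estimate
  have key : ∀ j : ℕ,
      ((p ^ j - 1) / (p - 1)) * Real.log B
        - p ^ j * (∑ k ∈ Finset.range (j + 1), (k : ℝ) * p ^ (-(k : ℝ))) * Real.log p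
        + p ^ j * Real.log (D 0) ≤ Real.log (D j) := by
    intro j
    induction j with
    | zero => simp
    | succ j ih =>
      have hDj := hDpos j
      have h1 : Real.log (B * D j ^ p / p ^ (j + 1))
          = Real.log B + p * Real.log (D j) - ((j : ℝ) + 1) * Real.log p := by
        rw [Real.log_div (by positivity) (by positivity),
          Real.log_mul hB.ne' (by positivity), Real.log_rpow hDj, Real.log_pow]
        push_cast; ring
      have h2 : Real.log (B * D j ^ p / p ^ (j + 1)) ≤ Real.log (D (j + 1)) :=
        Real.log_le_log (by positivity) (hrec j)
      have h3 : ((p ^ (j + 1) - 1) / (p - 1)) * Real.log B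
          - p ^ (j + 1) * (∑ k ∈ Finset.range (j + 1 + 1), (k : ℝ) * p ^ (-(k : ℝ))) * Real.log p
          + p ^ (j + 1) * Real.log (D 0)
          = Real.log B + p * (((p ^ j - 1) / (p - 1)) * Real.log B
            - p ^ j * (∑ k ∈ Finset.range (j + 1), (k : ℝ) * p ^ (-(k : ℝ))) * Real.log p
            + p ^ j * Real.log (D 0)) - ((j : ℝ) + 1) * Real.log p := by
        rw [Finset.sum_range_succ, hinv (j + 1)]
        have hpn : (p : ℝ) ^ (j + 1) ≠ 0 := by positivity
        push_cast
        field_simp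
        ring
      have h4 : p * (((p ^ j - 1) / (p - 1)) * Real.log B
            - p ^ j * (∑ k ∈ Finset.range (j + 1), (k : ℝ) * p ^ (-(k : ℝ))) * Real.log p
            + p ^ j * Real.log (D 0))
          ≤ p * Real.log (D j) := by
        exact mul_le_mul_of_nonneg_left ih hp0.le
      calc ((p ^ (j + 1) - 1) / (p - 1)) * Real.log B
          - p ^ (j + 1) * (∑ k ∈ Finset.range (j + 1 + 1), (k : ℝ) * p ^ (-(k : ℝ))) * Real.log p
          + p ^ (j + 1) * Real.log (D 0)
          ≤ Real.log B + p * Real.log (D j) - ((j : ℝ) + 1) * Real.log p := by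
            rw [h3]; linarith
        _ = Real.log (B * D j ^ p / p ^ (j + 1)) := h1.symm
        _ ≤ Real.log (D (j + 1)) := h2
  refine ⟨key, 0, fun j _ => ?_⟩
  set T : ℝ := ∑' k : ℕ, (k : ℝ) * p ^ (-(k : ℝ)) with hT
  set S : ℝ := ∑ k ∈ Finset.range (j + 1), (k : ℝ) * p ^ (-(k : ℝ)) with hS
  have hST : S ≤ T := Summable.sum_le_tsum _ (fun k _ => by positivity) hsum
  have hpj : (1 : ℝ) ≤ p ^ j := one_le_pow₀ hp.le
  have hm1 : min 0 (Real.log B) ≤ 0 := min_le_left _ _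
  have hm2 : min 0 (Real.log B) ≤ Real.log B := min_le_right _ _
  have h0 : p ^ j * min 0 (Real.log B) ≤ (p ^ j - 1) * Real.log B := by nlinarith
  have hBterm : (p ^ j / (p - 1)) * min 0 (Real.log B) ≤ ((p ^ j - 1) / (p - 1)) * Real.log B := by
    rw [div_mul_eq_mul_div, div_mul_eq_mul_div]
    exact (div_le_div_iff_of_pos_right hp1).mpr h0
  have hSterm : p ^ j * S * Real.log p ≤ p ^ j * T * Real.log p := by
    have : p ^ j * S ≤ p ^ j * T := mul_le_mul_of_nonneg_left hST (by positivity)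
    exact mul_le_mul_of_nonneg_right this hlp.le
  have hle : E * p ^ j ≤ Real.log (D j) := by
    have h5 : E * p ^ j = (p ^ j / (p - 1)) * min 0 (Real.log B) - p ^ j * T * Real.log p
        + p ^ j * Real.log A₀ := by rw [hE]; ring
    have h6 := key j
    rw [hD0] at h6
    rw [h5]
    linarith
  calc Real.exp (E * p ^ j) ≤ Real.exp (Real.log (D j)) := Real.exp_le_exp.mpr hle
    _ = D j := Real.exp_log (hDpos j)
end

section
/- Let ν ∈ ℝ and for t > 0 define K_ν(t) = ∫₀^∞ e^{-t cosh z} cosh(ν z) dz. Then K_ν satisfies the modified Bessel equation t² K_ν''(t) + t K_ν'(t) - (t² + ν²) K_ν(t) = 0 for all t > 0. -/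
/-!
Differentiating under the integral sign, which the double-exponential decay of
`e^{-t cosh z}` justifies, gives `K_ν' = -∫ cosh z e^{-t cosh z} cosh νz` and
`K_ν'' = ∫ cosh² z e^{-t cosh z} cosh νz`.
So the Bessel operator applied to `K_ν` is the integral over `(0, ∞)` of
`(t² cosh² z - t cosh z - t² - ν²) e^{-t cosh z} cosh νz`, which is the `z`-derivative of
`-e^{-t cosh z} (t sinh z cosh νz + ν sinh νz)`; this primitive vanishes at `z = 0` and as
`z → ∞`.
-/

/-- The modified Bessel function of the second kind, integral representation. -/
noncomputable def besselK (ν t : ℝ) : ℝ :=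
  ∫ z in Set.Ioi (0:ℝ), Real.exp (-t * Real.cosh z) * Real.cosh (ν * z)

open Real MeasureTheory Set Filter Topology Asymptotics

theorem cosh_le_exp_abs (x : ℝ) : cosh x ≤ exp |x| := by
  rw [← cosh_abs, ← cosh_add_sinh]
  linarith [sinh_nonneg_iff.2 (abs_nonneg x)]

theorem abs_sinh_le_cosh (x : ℝ) : |sinh x| ≤ cosh x := by
  rw [abs_sinh, ← cosh_abs x]
  exact (sinh_lt_cosh _).le

theorem isBigO_exp_mul_sub_mul_exp (b : ℝ) {c : ℝ} (hc : 0 < c) :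
    (fun z => exp (b * z - c * exp z)) =O[atTop] fun z => exp (-z) := by
  have hε : 0 < c / (|b + 1| + 1) := by positivity
  have hlin : ∀ᶠ z in atTop, (b + 1) * z ≤ c * exp z := by
    filter_upwards [(isLittleO_pow_exp_atTop (n := 1)).bound hε, eventually_ge_atTop 0]
      with z hbound hz
    rw [pow_one, norm_of_nonneg hz, norm_of_nonneg (exp_pos z).le] at hbound
    calc (b + 1) * z ≤ (|b + 1| + 1) * z := by gcongr; linarith [le_abs_self (b + 1)]
      _ ≤ (|b + 1| + 1) * (c / (|b + 1| + 1) * exp z) := by gcongr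
      _ = c * exp z := by field_simp
  refine IsBigO.of_bound 1 ?_
  filter_upwards [hlin] with z hz
  rw [norm_of_nonneg (exp_pos _).le, norm_of_nonneg (exp_pos _).le, one_mul, exp_le_exp]
  linarith

noncomputable def besselKIntegrand (ν : ℝ) (k : ℕ) (t z : ℝ) : ℝ :=
  cosh z ^ k * (exp (-t * cosh z) * cosh (ν * z))

noncomputable def besselKMoment (ν : ℝ) (k : ℕ) (t : ℝ) : ℝ :=
  ∫ z in Ioi 0, besselKIntegrand ν k t z

section

variable (ν : ℝ) (k : ℕ)

theorem besselK_eq_besselKMoment_zero : besselK ν = besselKMoment ν 0 := by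
  ext t
  simp [besselK, besselKMoment, besselKIntegrand]

theorem continuous_besselKIntegrand (t : ℝ) : Continuous (besselKIntegrand ν k t) := by
  unfold besselKIntegrand; fun_prop

theorem besselKIntegrand_nonneg (t z : ℝ) : 0 ≤ besselKIntegrand ν k t z := by
  unfold besselKIntegrand; positivity

theorem besselKIntegrand_le {t z : ℝ} (ht : 0 ≤ t) (hz : 0 ≤ z) :
    besselKIntegrand ν k t z ≤ exp ((k + |ν|) * z - t / 2 * exp z) := by
  have hpow : cosh z ^ k ≤ exp (k * z) := by
    rw [exp_nat_mul]
    gcongr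
    simpa [abs_of_nonneg hz] using cosh_le_exp_abs z
  have hdecay : exp (-t * cosh z) ≤ exp (-(t / 2 * exp z)) := by
    have : exp z / 2 ≤ cosh z := by rw [cosh_eq]; linarith [exp_pos (-z)]
    gcongr; nlinarith
  have hν : cosh (ν * z) ≤ exp (|ν| * z) := by
    simpa [abs_mul, abs_of_nonneg hz] using cosh_le_exp_abs (ν * z)
  calc besselKIntegrand ν k t z ≤ exp (k * z) * (exp (-(t / 2 * exp z)) * exp (|ν| * z)) := by
        unfold besselKIntegrand; gcongr
    _ = exp ((k + |ν|) * z - t / 2 * exp z) := by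
        rw [← exp_add, ← exp_add]; ring_nf

theorem besselKIntegrand_isBigO {t : ℝ} (ht : 0 < t) :
    besselKIntegrand ν k t =O[atTop] fun z => exp (-z) := by
  refine IsBigO.trans ?_ (isBigO_exp_mul_sub_mul_exp (k + |ν|) (half_pos ht))
  refine IsBigO.of_bound 1 ?_
  filter_upwards [eventually_ge_atTop 0] with z hz
  rw [norm_of_nonneg (besselKIntegrand_nonneg ν k t z), norm_of_nonneg (exp_pos _).le, one_mul]
  exact besselKIntegrand_le ν k ht.le hz

theorem integrableOn_besselKIntegrand {t : ℝ} (ht : 0 < t) :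
    IntegrableOn (besselKIntegrand ν k t) (Ioi 0) :=
  integrable_of_isBigO_exp_neg one_pos (continuous_besselKIntegrand ν k t).continuousOn
    (by simpa using besselKIntegrand_isBigO ν k ht)

theorem hasDerivAt_besselKIntegrand (t z : ℝ) :
    HasDerivAt (besselKIntegrand ν k · z) (-besselKIntegrand ν (k + 1) t z) t := by
  have hexp : HasDerivAt (fun s => exp (-s * cosh z)) (exp (-t * cosh z) * -cosh z) t :=
    ((hasDerivAt_neg t).mul_const (cosh z)).exp.congr_deriv (by ring)
  refine ((hexp.mul_const (cosh (ν * z))).const_mul (cosh z ^ k)).congr_deriv ?_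
  unfold besselKIntegrand; ring

theorem hasDerivAt_besselKMoment {t : ℝ} (ht : 0 < t) :
    HasDerivAt (besselKMoment ν k) (-besselKMoment ν (k + 1) t) t := by
  have ht2 : 0 < t / 2 := half_pos ht
  have hdom : ∀ z, ∀ s ∈ Ioi (t / 2),
      ‖-besselKIntegrand ν (k + 1) s z‖ ≤ besselKIntegrand ν (k + 1) (t / 2) z := by
    intro z s hs
    rw [norm_neg, norm_of_nonneg (besselKIntegrand_nonneg ν _ s z)]
    unfold besselKIntegrand
    gcongr
    exact hs.le
  have := hasDerivAt_integral_of_dominated_loc_of_deriv_le (μ := volume.restrict (Ioi 0))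
    (Ioi_mem_nhds (half_lt_self ht))
    (Eventually.of_forall fun s => (continuous_besselKIntegrand ν k s).aestronglyMeasurable)
    (integrableOn_besselKIntegrand ν k ht)
    (continuous_besselKIntegrand ν (k + 1) t).neg.aestronglyMeasurable
    (Eventually.of_forall (hdom ·)) (integrableOn_besselKIntegrand ν (k + 1) ht2)
    (Eventually.of_forall fun z s _ => hasDerivAt_besselKIntegrand ν k s z)
  rw [integral_neg] at this
  exact this.2

end

section

variable (ν : ℝ)

theorem hasDerivAt_besselK {t : ℝ} (ht : 0 < t) :
    HasDerivAt (besselK ν) (-besselKMoment ν 1 t) t := by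
  rw [besselK_eq_besselKMoment_zero]
  exact hasDerivAt_besselKMoment ν 0 ht

theorem deriv_besselK {t : ℝ} (ht : 0 < t) : deriv (besselK ν) t = -besselKMoment ν 1 t :=
  (hasDerivAt_besselK ν ht).deriv

theorem deriv_deriv_besselK {t : ℝ} (ht : 0 < t) :
    deriv (deriv (besselK ν)) t = besselKMoment ν 2 t := by
  have hderiv : deriv (besselK ν) =ᶠ[𝓝 t] fun s => -besselKMoment ν 1 s := by
    filter_upwards [Ioi_mem_nhds ht] with s hs using deriv_besselK ν hs
  simpa using ((hasDerivAt_besselKMoment ν 1 ht).neg.congr_of_eventuallyEq hderiv).deriv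

noncomputable def besselKBoundaryTerm (t z : ℝ) : ℝ :=
  -(exp (-t * cosh z) * (t * sinh z * cosh (ν * z) + ν * sinh (ν * z)))

theorem hasDerivAt_besselKBoundaryTerm (t z : ℝ) :
    HasDerivAt (besselKBoundaryTerm ν t)
      (t ^ 2 * besselKIntegrand ν 2 t z - t * besselKIntegrand ν 1 t z
        - (t ^ 2 + ν ^ 2) * besselKIntegrand ν 0 t z) z := by
  have hexp : HasDerivAt (fun z => exp (-t * cosh z)) (exp (-t * cosh z) * (-t * sinh z)) z :=
    ((hasDerivAt_cosh z).const_mul (-t)).exp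
  have hνz : HasDerivAt (ν * ·) ν z := by simpa using (hasDerivAt_id z).const_mul ν
  have hbracket : HasDerivAt (fun z => t * sinh z * cosh (ν * z) + ν * sinh (ν * z))
      (t * cosh z * cosh (ν * z) + t * sinh z * (sinh (ν * z) * ν)
        + ν * (cosh (ν * z) * ν)) z :=
    (((hasDerivAt_sinh z).const_mul t).mul hνz.cosh).add (hνz.sinh.const_mul ν)
  refine (hexp.mul hbracket).neg.congr_deriv ?_
  unfold besselKIntegrand
  linear_combination (t ^ 2 * exp (-t * cosh z) * cosh (ν * z)) * sinh_sq z

theorem abs_besselKBoundaryTerm_le {t : ℝ} (ht : 0 ≤ t) (z : ℝ) :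
    |besselKBoundaryTerm ν t z| ≤ (t + |ν|) * besselKIntegrand ν 1 t z := by
  have h₁ : |t * sinh z * cosh (ν * z)| ≤ t * cosh z * cosh (ν * z) := by
    rw [abs_mul, abs_mul, abs_of_nonneg ht, abs_of_pos (cosh_pos _)]
    gcongr; exact abs_sinh_le_cosh z
  have h₂ : |ν * sinh (ν * z)| ≤ |ν| * cosh z * cosh (ν * z) := by
    rw [abs_mul, mul_assoc]
    gcongr
    exact (abs_sinh_le_cosh _).trans (le_mul_of_one_le_left (cosh_pos _).le (one_le_cosh z))
  rw [besselKBoundaryTerm, abs_neg, abs_mul, abs_of_pos (exp_pos _)]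
  calc exp (-t * cosh z) * |t * sinh z * cosh (ν * z) + ν * sinh (ν * z)|
      ≤ exp (-t * cosh z) * (t * cosh z * cosh (ν * z) + |ν| * cosh z * cosh (ν * z)) := by
        gcongr; exact (abs_add_le _ _).trans (add_le_add h₁ h₂)
    _ = (t + |ν|) * besselKIntegrand ν 1 t z := by unfold besselKIntegrand; ring

theorem tendsto_besselKBoundaryTerm_atTop {t : ℝ} (ht : 0 < t) :
    Tendsto (besselKBoundaryTerm ν t) atTop (𝓝 0) := by
  have hbound : besselKBoundaryTerm ν t =O[atTop] besselKIntegrand ν 1 t := by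
    refine IsBigO.of_bound (t + |ν|) (Eventually.of_forall fun z => ?_)
    rw [norm_of_nonneg (besselKIntegrand_nonneg ν 1 t z)]
    exact abs_besselKBoundaryTerm_le ν ht.le z
  exact (hbound.trans (besselKIntegrand_isBigO ν 1 ht)).trans_tendsto
    tendsto_exp_neg_atTop_nhds_zero

theorem besselKMoment_recurrence {t : ℝ} (ht : 0 < t) :
    t ^ 2 * besselKMoment ν 2 t - t * besselKMoment ν 1 t
      - (t ^ 2 + ν ^ 2) * besselKMoment ν 0 t = 0 := by
  have hint (k : ℕ) (c : ℝ) : IntegrableOn (fun z => c * besselKIntegrand ν k t z) (Ioi 0) :=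
    (integrableOn_besselKIntegrand ν k ht).const_mul c
  have hFTC := integral_Ioi_of_hasDerivAt_of_tendsto'
    (fun z _ => hasDerivAt_besselKBoundaryTerm ν t z)
    (((hint 2 _).sub (hint 1 _)).sub (hint 0 _)) (tendsto_besselKBoundaryTerm_atTop ν ht)
  rw [integral_sub (by exact (hint 2 _).sub (hint 1 _)) (hint 0 _),
    integral_sub (hint 2 _) (hint 1 _), integral_const_mul, integral_const_mul,
    integral_const_mul] at hFTC
  have hzero : besselKBoundaryTerm ν t 0 = 0 := by simp [besselKBoundaryTerm]
  rw [hzero, sub_zero] at hFTC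
  unfold besselKMoment
  linarith

end

/-- `K_ν` satisfies the modified Bessel equation. -/
theorem besselK_ode (ν : ℝ) :
    ∀ t : ℝ, 0 < t →
      t ^ 2 * deriv (deriv (besselK ν)) t + t * deriv (besselK ν) t
        - (t ^ 2 + ν ^ 2) * besselK ν t = 0 := by
  intro t ht
  rw [deriv_deriv_besselK ν ht, deriv_besselK ν ht, besselK_eq_besselKMoment_zero]
  linarith [besselKMoment_recurrence ν ht]
end

section
/- Let n ≥ 2 and (n+1)/(n+2) ≤ α < 1. Then α(n+2) - (n+1) ≥ 0, and for every μ with 0 ≤ μ ≤ α(n+2) - (n+1), one has p_0(n,α,μ) ≥ p_G'(n,α,μ), where p_G'(n,α,μ) = 1 + 2/((1-α)(n-1) + μ + α) and p_0(n,α,μ) = 1 + 1/(n(1-α) + μ). -/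
/-- For `α` close to `1`, the exponent `p₀` dominates the generalized Glassey exponent. -/
theorem p0_ge_pG' (n : ℕ) (α : ℝ) (hn : 2 ≤ n)
    (hα₁ : ((n : ℝ) + 1) / ((n : ℝ) + 2) ≤ α) (hα₂ : α < 1) :
    0 ≤ α * ((n : ℝ) + 2) - ((n : ℝ) + 1) ∧
    ∀ μ : ℝ, 0 ≤ μ → μ ≤ α * ((n : ℝ) + 2) - ((n : ℝ) + 1) →
      1 + 1 / ((n : ℝ) * (1 - α) + μ) ≥ 1 + 2 / ((1 - α) * ((n : ℝ) - 1) + μ + α) := by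
  have hn2 : (2 : ℝ) ≤ (n : ℝ) := by exact_mod_cast hn
  have hpos : (0 : ℝ) < (n : ℝ) + 2 := by linarith
  have h1 : 0 ≤ α * ((n : ℝ) + 2) - ((n : ℝ) + 1) := by
    have := (div_le_iff₀ hpos).mp hα₁
    linarith
  refine ⟨h1, fun μ hμ0 hμ1 => ?_⟩
  have hd1 : (0 : ℝ) < (n : ℝ) * (1 - α) + μ := by nlinarith
  have hα0 : (0 : ℝ) < α := by nlinarith
  have hd2 : (0 : ℝ) < (1 - α) * ((n : ℝ) - 1) + μ + α := by nlinarith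
  have key : 2 / ((1 - α) * ((n : ℝ) - 1) + μ + α) ≤ 1 / ((n : ℝ) * (1 - α) + μ) := by
    rw [div_le_div_iff₀ hd2 hd1]
    nlinarith
  linarith
end
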